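/- arXiv:2302.11433 — 2 statements merged into one kernel-verified Lean document; each statement's English description precedes it below -/
import Mathlib

section
/- Let x_1 < x_2 < ... < x_{Δ+1} be real numbers with pairwise distances at least λ > 0, and let ξ_1,...,ξ_{Δ+1} be reals with |ξ_k| ≤ w for all k. Then there exists a unique vector (δ_0,...,δ_Δ) ∈ ℝ^{Δ+1} such that Σ_{i=0}^Δ δ_i x_k^i = ξ_k for all k; moreover, if all |x_k| ≤ M, then each |δ_i| ≤ C·w/λ^{(Δ+1)Δ/2} for a constant C depending only on Δ and M. -/
open Matrix Finset

private lemma abs_det_le_aux {n : ℕ} (A : Matrix (Fin n) (Fin n) ℝ) (B : ℝ)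
    (hB : 0 ≤ B) (h : ∀ i j, |A i j| ≤ B) : |A.det| ≤ Nat.factorial n * B ^ n := by
  rw [Matrix.det_apply']
  calc |∑ σ : Equiv.Perm (Fin n), (Equiv.Perm.sign σ : ℝ) * ∏ i, A (σ i) i|
      ≤ ∑ σ : Equiv.Perm (Fin n), |(Equiv.Perm.sign σ : ℝ) * ∏ i, A (σ i) i| :=
        Finset.abs_sum_le_sum_abs _ _
    _ ≤ ∑ _σ : Equiv.Perm (Fin n), B ^ n := by
        apply Finset.sum_le_sum
        intro σ _
        rw [abs_mul]
        have h1 : |((Equiv.Perm.sign σ : ℤ) : ℝ)| = 1 := by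
          rcases Int.units_eq_one_or (Equiv.Perm.sign σ) with hs | hs <;> simp [hs]
        rw [h1, one_mul, Finset.abs_prod]
        calc ∏ i, |A (σ i) i| ≤ ∏ _i : Fin n, B :=
              Finset.prod_le_prod (fun i _ => abs_nonneg _) (fun i _ => h _ _)
          _ = B ^ n := by simp
    _ = Nat.factorial n * B ^ n := by
        rw [Finset.sum_const, Finset.card_univ, Fintype.card_perm, Fintype.card_fin,
          nsmul_eq_mul]

private lemma sum_card_Ioi_aux (Δ : ℕ) :
    ∑ i : Fin (Δ + 1), (Finset.Ioi i).card = (Δ + 1) * Δ / 2 := by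
  simp only [Fin.card_Ioi]
  rw [Fin.sum_univ_eq_sum_range (fun i => Δ + 1 - 1 - i)]
  have := Finset.sum_range_reflect (fun j => j) (Δ + 1)
  rw [this, Finset.sum_range_id]
  simp

/-- Given Δ+1 reals with pairwise distances ≥ λ > 0 and targets ξ_k with
|ξ_k| ≤ w, there is a unique coefficient vector δ with Σ δ_i x_k^i = ξ_k; moreover if
|x_k| ≤ M for all k, each |δ_i| ≤ C·w/λ^((Δ+1)Δ/2) for C depending only on Δ and M. -/
theorem stmt_1 (Δ : ℕ) (M : ℝ) :
    ∃ C > 0, ∀ (x ξ : Fin (Δ + 1) → ℝ) (lam w : ℝ), 0 < lam →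
      (∀ k₁ k₂, k₁ ≠ k₂ → lam ≤ |x k₁ - x k₂|) →
      (∀ k, |ξ k| ≤ w) →
      (∃! δ : Fin (Δ + 1) → ℝ, ∀ k, ∑ i, δ i * x k ^ (i : ℕ) = ξ k) ∧
      ((∀ k, |x k| ≤ M) →
        ∀ δ : Fin (Δ + 1) → ℝ, (∀ k, ∑ i, δ i * x k ^ (i : ℕ) = ξ k) →
          ∀ i, |δ i| ≤ C * w / lam ^ ((Δ + 1) * Δ / 2)) := by
  set n := Δ + 1 with hn
  set B : ℝ := (max 1 M) ^ Δ with hBdef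
  have hB1 : (1 : ℝ) ≤ B := one_le_pow₀ (le_max_left _ _)
  have hB0 : (0 : ℝ) ≤ B := by linarith
  refine ⟨n * Nat.factorial n * B ^ n, by positivity, ?_⟩
  intro x ξ lam w hlam hsep hξ
  set V := Matrix.vandermonde x with hV
  -- lower bound on |det V|
  have hdet : V.det = ∏ i : Fin n, ∏ j ∈ Finset.Ioi i, (x j - x i) :=
    Matrix.det_vandermonde x
  have habsdet : lam ^ ((Δ + 1) * Δ / 2) ≤ |V.det| := by
    rw [hdet, Finset.abs_prod]
    have : ∀ i : Fin n, lam ^ (Finset.Ioi i).card ≤ |∏ j ∈ Finset.Ioi i, (x j - x i)| := by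
      intro i
      rw [Finset.abs_prod]
      calc lam ^ (Finset.Ioi i).card = ∏ _j ∈ Finset.Ioi i, lam := by
            rw [Finset.prod_const]
        _ ≤ ∏ j ∈ Finset.Ioi i, |x j - x i| := by
            apply Finset.prod_le_prod (fun _ _ => le_of_lt hlam)
            intro j hj
            exact hsep j i (ne_of_gt (Finset.mem_Ioi.mp hj))
    calc lam ^ ((Δ + 1) * Δ / 2) = ∏ i : Fin n, lam ^ (Finset.Ioi i).card := by
          rw [Finset.prod_pow_eq_pow_sum, sum_card_Ioi_aux]
      _ ≤ _ := Finset.prod_le_prod (fun i _ => by positivity) (fun i _ => this i)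
  have hdetpos : 0 < |V.det| := lt_of_lt_of_le (by positivity) habsdet
  have hdetne : V.det ≠ 0 := fun h => by simp [h] at hdetpos
  have hunit : IsUnit V.det := isUnit_iff_ne_zero.mpr hdetne
  -- translate the equations to mulVec
  have key : ∀ δ : Fin n → ℝ, (∀ k, ∑ i, δ i * x k ^ (i : ℕ) = ξ k) ↔ V *ᵥ δ = ξ := by
    intro δ
    constructor
    · intro h; funext k
      rw [← h k, Matrix.mulVec, dotProduct]
      exact Finset.sum_congr rfl fun i _ => by
        simp [hV, Matrix.vandermonde, mul_comm]
    · intro h k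
      rw [← congrFun h k, Matrix.mulVec, dotProduct]
      exact Finset.sum_congr rfl fun i _ => by
        simp [hV, Matrix.vandermonde, mul_comm]
  have hsolve : ∀ δ : Fin n → ℝ, V *ᵥ δ = ξ → δ = V⁻¹ *ᵥ ξ := by
    intro δ h
    rw [← h, Matrix.mulVec_mulVec, Matrix.nonsing_inv_mul _ hunit, Matrix.one_mulVec]
  constructor
  · refine ⟨V⁻¹ *ᵥ ξ, ?_, ?_⟩
    · apply (key _).mpr
      rw [Matrix.mulVec_mulVec, Matrix.mul_nonsing_inv _ hunit, Matrix.one_mulVec]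
    · intro δ hδ
      exact hsolve δ ((key δ).mp hδ)
  · intro hM δ hδ i
    have hw : 0 ≤ w := le_trans (abs_nonneg _) (hξ 0)
    have hδeq : δ = V⁻¹ *ᵥ ξ := hsolve δ ((key δ).mp hδ)
    -- bound on adjugate entries
    have hadj : ∀ i j, |V.adjugate i j| ≤ Nat.factorial n * B ^ n := by
      intro i j
      rw [Matrix.adjugate_apply]
      apply abs_det_le_aux _ _ hB0
      intro a b
      rw [Matrix.updateRow_apply]
      split
      · rcases eq_or_ne i b with h | h <;> simp [Pi.single_apply, h, hB1]
        linarith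
      · simp only [hV, Matrix.vandermonde, Matrix.of_apply]
        rw [abs_pow]
        calc |x a| ^ (b : ℕ) ≤ (max 1 M) ^ (b : ℕ) := by
              apply pow_le_pow_left₀ (abs_nonneg _)
              exact le_trans (hM a) (le_max_right _ _)
          _ ≤ (max 1 M) ^ Δ := by
              apply pow_le_pow_right₀ (le_max_left _ _)
              exact Nat.lt_succ_iff.mp b.isLt
    have hinv : ∀ i j, |V⁻¹ i j| ≤ Nat.factorial n * B ^ n / lam ^ ((Δ + 1) * Δ / 2) := by
      intro i j
      rw [Matrix.inv_def, Ring.inverse_eq_inv]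
      simp only [Matrix.smul_apply, smul_eq_mul, abs_mul, abs_inv]
      rw [div_eq_mul_inv, mul_comm (Nat.factorial n * B ^ n)]
      apply mul_le_mul
      · exact inv_anti₀ (by positivity) habsdet
      · exact hadj i j
      · exact abs_nonneg _
      · positivity
    rw [hδeq]
    have : (V⁻¹ *ᵥ ξ) i = ∑ j, V⁻¹ i j * ξ j := rfl
    rw [this]
    calc |∑ j, V⁻¹ i j * ξ j| ≤ ∑ j, |V⁻¹ i j * ξ j| := Finset.abs_sum_le_sum_abs _ _
      _ ≤ ∑ _j : Fin n, (Nat.factorial n * B ^ n / lam ^ ((Δ + 1) * Δ / 2)) * w := by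
          apply Finset.sum_le_sum
          intro j _
          rw [abs_mul]
          apply mul_le_mul (hinv i j) (hξ j) (abs_nonneg _) (by positivity)
      _ = n * Nat.factorial n * B ^ n * w / lam ^ ((Δ + 1) * Δ / 2) := by
          rw [Finset.sum_const, Finset.card_univ, Fintype.card_fin, nsmul_eq_mul]
          ring
end

section
/- Let G(x) = x + g_0 and F(x) = f_1 x + f_0 be real polynomials with Res(G,F) = f_0 − g_0 f_1 ≠ 0. Let x_1, x_2, x_3 be distinct reals with G(x_k) ≠ 0, and set y_k = F(x_k)/G(x_k). Then the 3×3 matrix A with k-th row (1, x_k, y_k) satisfies det(A) = Res(G,F) · (x_2−x_1)(x_3−x_1)(x_3−x_2) / (G(x_1)G(x_2)G(x_3)), up to sign. In particular det(A) ≠ 0, so for any target values z_1, z_2, z_3 there is a unique bivariate function of the form c_0 + c_1 x + c_2 y taking value z_k at (x_k, y_k). -/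
/-- ℓ = 3 instance. With G(x) = x + g₀, F(x) = f₁x + f₀,
Res(G,F) = f₀ − g₀f₁ ≠ 0, distinct x₁,x₂,x₃ with G(x_k) ≠ 0 and y_k = F(x_k)/G(x_k),
the matrix with rows (1, x_k, y_k) has determinant
± Res(G,F)·(x₂−x₁)(x₃−x₁)(x₃−x₂)/(G(x₁)G(x₂)G(x₃)) ≠ 0, and interpolation by
c₀ + c₁x + c₂y at the three points is uniquely solvable. -/
theorem stmt_7 (g₀ f₁ f₀ : ℝ) (hres : f₀ - g₀ * f₁ ≠ 0)
    (x : Fin 3 → ℝ) (hx : Function.Injective x)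
    (hGx : ∀ k, x k + g₀ ≠ 0)
    (y : Fin 3 → ℝ) (hy : ∀ k, y k = (f₁ * x k + f₀) / (x k + g₀))
    (A : Matrix (Fin 3) (Fin 3) ℝ)
    (hA : ∀ k, A k = ![1, x k, y k]) :
    (A.det = (f₀ - g₀ * f₁) * ((x 1 - x 0) * (x 2 - x 0) * (x 2 - x 1)) /
        ((x 0 + g₀) * (x 1 + g₀) * (x 2 + g₀)) ∨
     A.det = -((f₀ - g₀ * f₁) * ((x 1 - x 0) * (x 2 - x 0) * (x 2 - x 1)) /
        ((x 0 + g₀) * (x 1 + g₀) * (x 2 + g₀)))) ∧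
    A.det ≠ 0 ∧
    ∀ z : Fin 3 → ℝ, ∃! c : Fin 3 → ℝ,
      ∀ k, c 0 + c 1 * x k + c 2 * y k = z k := by
  have h0 := hGx 0; have h1 := hGx 1; have h2 := hGx 2
  have hdet : A.det = (f₀ - g₀ * f₁) * ((x 1 - x 0) * (x 2 - x 0) * (x 2 - x 1)) /
      ((x 0 + g₀) * (x 1 + g₀) * (x 2 + g₀)) := by
    rw [Matrix.det_fin_three]
    simp only [hA, hy]
    simp [Matrix.cons_val_zero, Matrix.cons_val_one]
    field_simp
    ring
  have hd12 : x 1 - x 0 ≠ 0 := sub_ne_zero.2 fun h => by simpa using hx h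
  have hd13 : x 2 - x 0 ≠ 0 := sub_ne_zero.2 fun h => by simpa using hx h
  have hd23 : x 2 - x 1 ≠ 0 := sub_ne_zero.2 fun h => by simpa using hx h
  have hne : A.det ≠ 0 := by
    rw [hdet]
    exact div_ne_zero (mul_ne_zero hres (mul_ne_zero (mul_ne_zero hd12 hd13) hd23))
      (mul_ne_zero (mul_ne_zero h0 h1) h2)
  refine ⟨Or.inl hdet, hne, fun z => ?_⟩
  have hinv : IsUnit A.det := hne.isUnit
  have key : ∀ c : Fin 3 → ℝ, (∀ k, c 0 + c 1 * x k + c 2 * y k = z k) ↔ A.mulVec c = z := by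
    intro c
    constructor
    · intro h
      funext k
      rw [Matrix.mulVec, dotProduct]
      rw [Fin.sum_univ_three]
      simp [hA]
      linarith [h k]
    · intro h k
      have := congrFun h k
      rw [Matrix.mulVec, dotProduct, Fin.sum_univ_three] at this
      simp [hA] at this
      linarith [this]
  refine ⟨A⁻¹.mulVec z, ?_, ?_⟩
  · exact (key _).mpr
      (by rw [Matrix.mulVec_mulVec, Matrix.mul_nonsing_inv A hinv, Matrix.one_mulVec])
  · intro c hc
    rw [key c] at hc
    rw [← hc, Matrix.mulVec_mulVec, Matrix.nonsing_inv_mul A hinv, Matrix.one_mulVec]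
end
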